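/- arXiv:2204.08833 — 6 statements merged into one kernel-verified Lean document; each statement's English description precedes it below -/
import Mathlib

section
/- Let X be a Tychonoff space and let M be a maximal ideal of C(X,ℝ) such that there exists g ∉ M with f·g bounded for every f ∈ C(X,ℝ). If ψ : C(X,ℝ) →+* C(Y,ℝ) is a ring isomorphism, then ψ(M) also has this property: there exists h ∉ ψ(M) with k·h bounded for every k ∈ C(Y,ℝ). -/
/-!
Boundedness of `f ∈ C(Z, ℝ)` is an algebraic property: `f` is bounded iff `n ^ 2 = f ^ 2 + k ^ 2`
for some natural number `n` and some `k ∈ C(Z, ℝ)` (take `k = √(n ^ 2 - f ^ 2)`). Ring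
homomorphisms preserve such identities, so `ψ` maps bounded functions to bounded functions, and
`ψ g` witnesses the property for `ψ(M)`: `k · ψ g = ψ (ψ⁻¹ k · g)` is bounded.
-/

namespace ContinuousMap

variable {Z W : Type*} [TopologicalSpace Z] [TopologicalSpace W]

lemma exists_abs_le_iff_exists_natCast_sq_eq (f : C(Z, ℝ)) :
    (∃ C : ℝ, ∀ z, |f z| ≤ C) ↔ ∃ (n : ℕ) (k : C(Z, ℝ)), (n : C(Z, ℝ)) ^ 2 = f ^ 2 + k ^ 2 := by
  constructor
  · rintro ⟨C, hC⟩
    obtain ⟨n, hn⟩ := exists_nat_ge C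
    have hsq : ∀ z, f z ^ 2 ≤ (n : ℝ) ^ 2 := fun z =>
      sq_le_sq.mpr <| ((hC z).trans hn).trans (le_abs_self _)
    refine ⟨n, ⟨fun z => √((n : ℝ) ^ 2 - f z ^ 2), by fun_prop⟩, ?_⟩
    ext z
    simp [Real.sq_sqrt (sub_nonneg.mpr (hsq z))]
  · rintro ⟨n, k, hk⟩
    refine ⟨n, fun z => abs_le_of_sq_le_sq ?_ n.cast_nonneg⟩
    have hz := congrArg (· z) hk
    simp only [add_apply, pow_apply, natCast_apply] at hz
    nlinarith [sq_nonneg (k z)]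

lemma exists_abs_map_le {F : Type*} [FunLike F C(Z, ℝ) C(W, ℝ)] [RingHomClass F C(Z, ℝ) C(W, ℝ)]
    (φ : F) {f : C(Z, ℝ)} (hf : ∃ C : ℝ, ∀ z, |f z| ≤ C) : ∃ C : ℝ, ∀ w, |φ f w| ≤ C := by
  obtain ⟨n, k, hk⟩ := (exists_abs_le_iff_exists_natCast_sq_eq f).mp hf
  refine (exists_abs_le_iff_exists_natCast_sq_eq (φ f)).mpr ⟨n, φ k, ?_⟩
  simpa only [map_pow, map_add, map_natCast] using congrArg φ hk

end ContinuousMap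

theorem stmt_6_general {X Y : Type*} [TopologicalSpace X] [TopologicalSpace Y]
    (M : Ideal C(X, ℝ)) (g : C(X, ℝ)) (hg : g ∉ M)
    (hbdd : ∀ f : C(X, ℝ), ∃ C : ℝ, ∀ x : X, |(f * g) x| ≤ C)
    (ψ : C(X, ℝ) ≃+* C(Y, ℝ)) :
    ∃ h : C(Y, ℝ), h ∉ Ideal.map (ψ : C(X, ℝ) →+* C(Y, ℝ)) M ∧
      ∀ k : C(Y, ℝ), ∃ C : ℝ, ∀ y : Y, |(k * h) y| ≤ C := by
  refine ⟨ψ g, Ideal.apply_mem_of_equiv_iff.not.mpr hg, fun k => ?_⟩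
  simpa only [map_mul, RingEquiv.apply_symm_apply] using
    ContinuousMap.exists_abs_map_le ψ (hbdd (ψ.symm k))

theorem stmt_6 {X Y : Type*} [TopologicalSpace X] [T35Space X] [TopologicalSpace Y]
    (M : Ideal C(X, ℝ)) (hM : M.IsMaximal) (g : C(X, ℝ)) (hg : g ∉ M)
    (hbdd : ∀ f : C(X, ℝ), ∃ C : ℝ, ∀ x : X, |(f * g) x| ≤ C)
    (ψ : C(X, ℝ) ≃+* C(Y, ℝ)) :
    ∃ h : C(Y, ℝ), h ∉ Ideal.map (ψ : C(X, ℝ) →+* C(Y, ℝ)) M ∧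
      ∀ k : C(Y, ℝ), ∃ C : ℝ, ∀ y : Y, |(k * h) y| ≤ C :=
  stmt_6_general M g hg hbdd ψ
end

section
/- Let X and Y be topological spaces and ψ : C(X,ℝ) →+* C(Y,ℝ) a ring isomorphism. If f ∈ C(X,ℝ) is bounded, then ψ(f) is bounded. -/
/-! A continuous real function is nonnegative exactly when it is a square (take its pointwise
square root), so `f` is bounded iff `n - f * f` is a square for some natural number `n`.
This characterization is purely ring-theoretic, hence preserved by ring isomorphisms. -/

namespace ContinuousMap

variable {X : Type*} [TopologicalSpace X]

theorem isSquare_iff_nonneg {g : C(X, ℝ)} : IsSquare g ↔ 0 ≤ g := by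
  constructor
  · rintro ⟨r, rfl⟩ x
    exact mul_self_nonneg (r x)
  · intro hg
    refine ⟨⟨fun x ↦ √(g x), by fun_prop⟩, ?_⟩
    ext x
    exact (Real.mul_self_sqrt (hg x)).symm

theorem exists_abs_le_iff_exists_isSquare_natCast_sub_mul_self (f : C(X, ℝ)) :
    (∃ C : ℝ, ∀ x, |f x| ≤ C) ↔ ∃ n : ℕ, IsSquare ((n : C(X, ℝ)) - f * f) := by
  simp only [isSquare_iff_nonneg, ContinuousMap.le_def, mul_apply, natCast_apply, sub_nonneg]
  constructor
  · rintro ⟨C, hC⟩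
    obtain ⟨n, hn⟩ := exists_nat_ge (C ^ 2)
    refine ⟨n, fun x ↦ ?_⟩
    calc f x * f x = |f x| ^ 2 := by rw [sq_abs, sq]
      _ ≤ C ^ 2 := pow_le_pow_left₀ (abs_nonneg _) (hC x) 2
      _ ≤ n := hn
  · rintro ⟨n, hn⟩
    exact ⟨√n, fun x ↦ Real.abs_le_sqrt (by rw [sq]; exact hn x)⟩

end ContinuousMap

theorem stmt_7 {X Y : Type*} [TopologicalSpace X] [TopologicalSpace Y]
    (ψ : C(X, ℝ) ≃+* C(Y, ℝ)) (f : C(X, ℝ)) (hf : ∃ C : ℝ, ∀ x : X, |f x| ≤ C) :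
    ∃ C : ℝ, ∀ y : Y, |ψ f y| ≤ C := by
  rw [ContinuousMap.exists_abs_le_iff_exists_isSquare_natCast_sub_mul_self] at hf ⊢
  obtain ⟨n, hn⟩ := hf
  exact ⟨n, by simpa using hn.map ψ⟩
end

section
/- Let X be a Tychonoff space and P a set of maximal ideals of C(X,ℝ). Suppose every ideal in P is fixed (X is 'P-compact'), and let N_P(X) = {x ∈ X : M_x ∉ P}. Then the map σ : X \ N_P(X) → P, σ(x) = M_x, is a homeomorphism, where P carries the hull-kernel topology (basic closed sets {M ∈ P : f ∈ M} for f ∈ C(X,ℝ)) and X \ N_P(X) carries the subspace topology. -/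
/-!
The preimage of the basic open set `D(f)` of the spectrum under `x ↦ M_x` is the cozero set
`{f ≠ 0}`. Cozero sets are open, and in a completely regular space they form a base, so `x ↦ M_x`
is a topological embedding of `X` into the maximal spectrum. Since every ideal of `P` is fixed, `P`
lies in its range, and an embedding restricts to a homeomorphism from the preimage of any subset
of its range onto that subset.
-/

/-- Evaluation at a point as a ring homomorphism `C(X,ℝ) →+* ℝ`. -/
def evalHom (X : Type*) [TopologicalSpace X] (x : X) : C(X, ℝ) →+* ℝ :=
  (Pi.evalRingHom (fun _ : X => ℝ) x).comp ContinuousMap.coeFnRingHom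

/-- The fixed maximal ideal `M_x = {f : f x = 0}` as a point of the maximal spectrum. -/
def maxIdealAt (X : Type*) [TopologicalSpace X] (x : X) : MaximalSpectrum C(X, ℝ) :=
  ⟨RingHom.ker (evalHom X x),
    RingHom.ker_isMaximal_of_surjective (evalHom X x)
      (fun r => ⟨ContinuousMap.const X r, rfl⟩)⟩

open Topology PrimeSpectrum

lemma CompletelyRegularSpace.exists_continuousMap_support_subset {X : Type*}
    [TopologicalSpace X] [CompletelyRegularSpace X] {x : X} {U : Set X} (hU : IsOpen U)
    (hx : x ∈ U) : ∃ g : C(X, ℝ), g x = 1 ∧ Function.support g ⊆ U := by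
  obtain ⟨f, hf, hfx, hfU⟩ := CompletelyRegularSpace.completely_regular_isOpen x U hU hx
  refine ⟨⟨fun y => 1 - f y, by fun_prop⟩, by simp [hfx], fun y hy => ?_⟩
  by_contra hyU
  simp [hfU hyU] at hy

section maxIdealAt

variable {X : Type*} [TopologicalSpace X]

lemma mem_maxIdealAt {x : X} {f : C(X, ℝ)} : f ∈ (maxIdealAt X x).asIdeal ↔ f x = 0 :=
  RingHom.mem_ker

lemma preimage_basicOpen_maxIdealAt (f : C(X, ℝ)) :
    (MaximalSpectrum.toPrimeSpectrum ∘ maxIdealAt X) ⁻¹' basicOpen f = Function.support f := by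
  ext x
  exact (mem_basicOpen _ _).trans mem_maxIdealAt.not

lemma continuous_toPrimeSpectrum_comp_maxIdealAt :
    Continuous (MaximalSpectrum.toPrimeSpectrum ∘ maxIdealAt X) :=
  isTopologicalBasis_basic_opens.continuous_iff.2 <| Set.forall_mem_range.2 fun f => by
    rw [preimage_basicOpen_maxIdealAt]
    exact f.continuous.isOpen_support

lemma isInducing_toPrimeSpectrum_comp_maxIdealAt [CompletelyRegularSpace X] :
    IsInducing (MaximalSpectrum.toPrimeSpectrum ∘ maxIdealAt X) := by
  refine isInducing_iff_nhds.2 fun x => le_antisymm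
    (continuous_toPrimeSpectrum_comp_maxIdealAt.tendsto x).le_comap fun U hU => ?_
  obtain ⟨V, hVU, hV, hxV⟩ := mem_nhds_iff.1 hU
  obtain ⟨g, hgx, hgV⟩ := CompletelyRegularSpace.exists_continuousMap_support_subset hV hxV
  refine Filter.mem_comap.2 ⟨basicOpen g, isOpen_basicOpen.mem_nhds ?_, ?_⟩
  · change x ∈ (MaximalSpectrum.toPrimeSpectrum ∘ maxIdealAt X) ⁻¹' basicOpen g
    rw [preimage_basicOpen_maxIdealAt, Function.mem_support, hgx]
    exact one_ne_zero
  · rw [preimage_basicOpen_maxIdealAt]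
    exact hgV.trans hVU

lemma isEmbedding_maxIdealAt [T35Space X] : IsEmbedding (maxIdealAt X) :=
  ((IsInducing.induced MaximalSpectrum.toPrimeSpectrum).of_comp_iff.1
    isInducing_toPrimeSpectrum_comp_maxIdealAt).isEmbedding

end maxIdealAt

theorem stmt_9 {X : Type*} [TopologicalSpace X] [T35Space X]
    (P : Set (MaximalSpectrum C(X, ℝ)))
    (hfix : ∀ M ∈ P, ∃ x : X, M = maxIdealAt X x) :
    ∃ e : {x : X | maxIdealAt X x ∈ P} ≃ₜ P,
      ∀ x : {x : X | maxIdealAt X x ∈ P}, (e x : MaximalSpectrum C(X, ℝ)) = maxIdealAt X x := by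
  have hP : P ⊆ Set.range (maxIdealAt X) := fun M hM => (hfix M hM).imp fun _ h => h.symm
  exact ⟨isEmbedding_maxIdealAt.homeomorphOfSubsetRange hP, fun _ => rfl⟩
end

section
/- Let X be a Tychonoff space in which every maximal ideal of C(X,ℝ) is fixed. Then the map x ↦ M_x is a homeomorphism from X onto the maximal ideal space Max(C(X,ℝ)) equipped with the hull-kernel topology. -/
section

variable {X : Type*} [TopologicalSpace X]

@[simp]
lemma mem_maxIdealAt_iff (x : X) (f : C(X, ℝ)) :
    f ∈ (maxIdealAt X x).asIdeal ↔ f x = 0 := Iff.rfl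

lemma IsClosed.mem_iff_forall_continuousMap_eq_zero [CompletelyRegularSpace X] {C : Set X}
    (hC : IsClosed C) {x : X} : x ∈ C ↔ ∀ f : C(X, ℝ), (∀ z ∈ C, f z = 0) → f x = 0 := by
  refine ⟨fun hx f hf => hf x hx, fun h => ?_⟩
  by_contra hx
  obtain ⟨g, hg, hgx, hgC⟩ := CompletelyRegularSpace.completely_regular x C hC hx
  have := h ⟨fun z => (g z : ℝ) - 1, by fun_prop⟩ fun z hz => by simp [hgC hz]
  simp [hgx] at this

lemma maxIdealAt_injective [T35Space X] : Function.Injective (maxIdealAt X) := by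
  intro x y hxy
  have hy : y ∈ ({x} : Set X) := by
    refine isClosed_singleton.mem_iff_forall_continuousMap_eq_zero.mpr fun f hf => ?_
    rw [← mem_maxIdealAt_iff, ← hxy, mem_maxIdealAt_iff]
    exact hf x rfl
  exact hy.symm

lemma preimage_maxIdealAt_zeroLocus (S : Set C(X, ℝ)) :
    maxIdealAt X ⁻¹' (MaximalSpectrum.toPrimeSpectrum ⁻¹' PrimeSpectrum.zeroLocus S) =
      ⋂ f ∈ S, (f : X → ℝ) ⁻¹' {0} := by
  ext x
  simp only [Set.mem_preimage, PrimeSpectrum.mem_zeroLocus, Set.mem_iInter,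
    Set.mem_singleton_iff]
  exact ⟨fun h f hf => h hf, fun h f hf => h f hf⟩

lemma continuous_maxIdealAt : Continuous (maxIdealAt X) := by
  refine continuous_induced_rng.mpr <| continuous_iff_isClosed.mpr fun C hC => ?_
  obtain ⟨S, rfl⟩ := (PrimeSpectrum.isClosed_iff_zeroLocus C).mp hC
  rw [Set.preimage_comp, preimage_maxIdealAt_zeroLocus]
  exact isClosed_biInter fun f _ => isClosed_singleton.preimage f.continuous

lemma image_maxIdealAt_of_isClosed [CompletelyRegularSpace X]
    (hsurj : Function.Surjective (maxIdealAt X)) {C : Set X} (hC : IsClosed C) :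
    maxIdealAt X '' C = MaximalSpectrum.toPrimeSpectrum ⁻¹'
      PrimeSpectrum.zeroLocus {f : C(X, ℝ) | ∀ z ∈ C, f z = 0} := by
  rw [← Set.image_preimage_eq (_ ⁻¹' _) hsurj, preimage_maxIdealAt_zeroLocus]
  congr 1
  ext x
  simp only [Set.mem_iInter, Set.mem_preimage, Set.mem_singleton_iff, Set.mem_ofPred_eq]
  exact hC.mem_iff_forall_continuousMap_eq_zero

lemma isClosedMap_maxIdealAt [CompletelyRegularSpace X]
    (hsurj : Function.Surjective (maxIdealAt X)) : IsClosedMap (maxIdealAt X) := fun C hC => by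
  rw [image_maxIdealAt_of_isClosed hsurj hC]
  exact (PrimeSpectrum.isClosed_zeroLocus _).preimage MaximalSpectrum.toPrimeSpectrum_continuous

lemma isHomeomorph_maxIdealAt [T35Space X] (hsurj : Function.Surjective (maxIdealAt X)) :
    IsHomeomorph (maxIdealAt X) :=
  isHomeomorph_iff_continuous_isClosedMap_bijective.mpr
    ⟨continuous_maxIdealAt, isClosedMap_maxIdealAt hsurj, maxIdealAt_injective, hsurj⟩

end

theorem stmt_10 {X : Type*} [TopologicalSpace X] [T35Space X]
    (hfix : ∀ M : MaximalSpectrum C(X, ℝ), ∃ x : X, M = maxIdealAt X x) :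
    ∃ e : X ≃ₜ MaximalSpectrum C(X, ℝ), ∀ x : X, e x = maxIdealAt X x :=
  ⟨(isHomeomorph_maxIdealAt fun M => (hfix M).imp fun _ => Eq.symm).homeomorph, fun _ => rfl⟩
end

section
/- Let X and Y be Tychonoff spaces and suppose every maximal ideal of C(X,ℝ) is fixed and every maximal ideal of C(Y,ℝ) is fixed. If C(X,ℝ) and C(Y,ℝ) are isomorphic as rings, then X and Y are homeomorphic. -/
/-!
Every ring homomorphism `C(X, ℝ) →+* ℝ` fixes the constants, since `ℝ` has no nontrivial ring
endomorphism; so it is onto and its kernel is a maximal ideal. If all maximal ideals are fixed, this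
kernel is the ideal of some point, and then the homomorphism is evaluation at that point. Hence a
ring homomorphism `φ : C(X, ℝ) →+* C(Y, ℝ)` is composition with a map `Y → X`, which is continuous
because `X` carries the initial topology of `C(X, ℝ)`. A ring isomorphism yields two such maps, and
they are mutually inverse because continuous functions separate the points of a Tychonoff space.
-/

section

open Filter Set Topology

variable {X Y : Type*} [TopologicalSpace X] [TopologicalSpace Y]

theorem eq_of_forall_continuousMap_apply_eq [T35Space X] {a b : X}
    (h : ∀ f : C(X, ℝ), f a = f b) : a = b := by
  by_contra hab
  obtain ⟨f, hf, hfab⟩ := separatesPoints_continuous_of_t35Space hab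
  exact hfab (h ⟨f, hf⟩)

theorem continuous_of_forall_continuousMap_comp [CompletelyRegularSpace X] {σ : Y → X}
    (h : ∀ f : C(X, ℝ), Continuous (f ∘ σ)) : Continuous σ := by
  refine continuous_iff_continuousAt.2 fun y U hU => ?_
  obtain ⟨V, hVU, hV, hyV⟩ := mem_nhds_iff.1 hU
  obtain ⟨f, hf, hfy, hfV⟩ := CompletelyRegularSpace.completely_regular_isOpen (σ y) V hV hyV
  let g : C(X, ℝ) := ⟨fun x => f x, continuous_subtype_val.comp hf⟩
  have hg : g ∘ σ ⁻¹' Iio 1 ∈ 𝓝 y :=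
    (h g).continuousAt.preimage_mem_nhds (Iio_mem_nhds (by simp [g, hfy]))
  refine mem_map.2 <| mem_of_superset hg fun y' hy' => hVU <| not_not.1 fun hy'V => ?_
  have : g (σ y') = 1 := by simp [g, hfV hy'V]
  exact (lt_irrefl (1 : ℝ)) (this ▸ hy')

namespace ContinuousMap

theorem ringHom_apply_const (ψ : C(X, ℝ) →+* ℝ) (c : ℝ) : ψ (const X c) = c :=
  DFunLike.congr_fun (Subsingleton.elim (ψ.comp (C (R := ℝ))) (RingHom.id ℝ)) c

theorem exists_ringHom_eq_eval
    (hX : ∀ I : Ideal C(X, ℝ), I.IsMaximal → ∃ x : X, (I : Set C(X, ℝ)) = {f | f x = 0})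
    (ψ : C(X, ℝ) →+* ℝ) : ∃ x : X, ∀ f : C(X, ℝ), ψ f = f x := by
  have hψ : Function.Surjective ψ := fun c => ⟨const X c, ringHom_apply_const ψ c⟩
  obtain ⟨x, hx⟩ := hX _ (RingHom.ker_isMaximal_of_surjective ψ hψ)
  refine ⟨x, fun f => ?_⟩
  have hf : f - const X (ψ f) ∈ RingHom.ker ψ := by
    simp [RingHom.mem_ker, ringHom_apply_const]
  rw [← SetLike.mem_coe, hx, mem_ofPred_eq, sub_apply, const_apply, sub_eq_zero] at hf
  exact hf.symm

theorem exists_ringHom_eq_comp [CompletelyRegularSpace X]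
    (hX : ∀ I : Ideal C(X, ℝ), I.IsMaximal → ∃ x : X, (I : Set C(X, ℝ)) = {f | f x = 0})
    (φ : C(X, ℝ) →+* C(Y, ℝ)) : ∃ σ : C(Y, X), ∀ f : C(X, ℝ), φ f = f.comp σ := by
  choose σ hσ using fun y =>
    exists_ringHom_eq_eval hX ((evalAlgHom ℝ ℝ y).toRingHom.comp φ)
  have hσ' (f : C(X, ℝ)) : φ f = f ∘ σ := funext (hσ · f)
  refine ⟨⟨σ, continuous_of_forall_continuousMap_comp fun f => hσ' f ▸ (φ f).continuous⟩,
    fun f => ext (hσ · f)⟩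

end ContinuousMap

end

theorem stmt_11 {X Y : Type*} [TopologicalSpace X] [T35Space X]
    [TopologicalSpace Y] [T35Space Y]
    (hX : ∀ I : Ideal C(X, ℝ), I.IsMaximal → ∃ x : X, (I : Set C(X, ℝ)) = {f : C(X, ℝ) | f x = 0})
    (hY : ∀ J : Ideal C(Y, ℝ), J.IsMaximal → ∃ y : Y, (J : Set C(Y, ℝ)) = {g : C(Y, ℝ) | g y = 0})
    (h : Nonempty (C(X, ℝ) ≃+* C(Y, ℝ))) : Nonempty (X ≃ₜ Y) := by
  obtain ⟨φ⟩ := h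
  obtain ⟨σ, hσ⟩ := ContinuousMap.exists_ringHom_eq_comp hX (φ : C(X, ℝ) →+* C(Y, ℝ))
  obtain ⟨τ, hτ⟩ := ContinuousMap.exists_ringHom_eq_comp hY (φ.symm : C(Y, ℝ) →+* C(X, ℝ))
  have hστ (x : X) : σ (τ x) = x := eq_of_forall_continuousMap_apply_eq fun f => by
    rw [← f.comp_apply σ, ← hσ, ← ContinuousMap.comp_apply, ← hτ]
    simp
  have hτσ (y : Y) : τ (σ y) = y := eq_of_forall_continuousMap_apply_eq fun g => by
    rw [← g.comp_apply τ, ← hτ, ← ContinuousMap.comp_apply, ← hσ]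
    simp
  exact ⟨⟨⟨τ, σ, hστ, hτσ⟩, τ.continuous, σ.continuous⟩⟩
end

section
/- Let X be a Tychonoff space. The maximal ideal space Max(C(X,ℝ)) with the hull-kernel topology is Hausdorff. -/
/-!
For distinct maximal ideals `M`, `N` pick `f ∈ M`, `g ∈ N` with `f + g = 1`. The positive and
negative parts of `f - g` multiply to zero, so the basic open sets they define are disjoint; and
the negative part does not vanish where `f` does (there `g = 1`), so adding `f²` to it gives a
unit, which keeps it out of `M`; symmetrically the positive part lies outside `N`.
-/

open ContinuousMap

theorem MaximalSpectrum.t2Space_of_exists_mul_eq_zero {R : Type*} [CommRing R]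
    (h : ∀ M N : MaximalSpectrum R, M ≠ N →
      ∃ a b : R, a ∉ M.asIdeal ∧ b ∉ N.asIdeal ∧ a * b = 0) :
    T2Space (MaximalSpectrum R) := by
  refine ⟨fun M N hMN => ?_⟩
  obtain ⟨a, b, haM, hbN, hab⟩ := h M N hMN
  refine ⟨toPrimeSpectrum ⁻¹' PrimeSpectrum.basicOpen a,
    toPrimeSpectrum ⁻¹' PrimeSpectrum.basicOpen b,
    (PrimeSpectrum.basicOpen a).isOpen.preimage toPrimeSpectrum_continuous,
    (PrimeSpectrum.basicOpen b).isOpen.preimage toPrimeSpectrum_continuous, haM, hbN, ?_⟩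
  refine Set.disjoint_left.mpr fun P hPa hPb => ?_
  have habP : a * b ∈ P.asIdeal := hab ▸ P.asIdeal.zero_mem
  exact (P.isMaximal.isPrime.mem_or_mem habP).elim hPa hPb

namespace ContinuousMap

variable {X : Type*} [TopologicalSpace X]

theorem negPart_mul_posPart (h : C(X, ℝ)) : h⁻ * h⁺ = 0 := by
  ext x
  simpa [posPart_def, negPart_def] using le_total 0 (h x)

theorem notMem_of_nonneg_of_forall_eq_zero_pos {I : Ideal C(X, ℝ)} (hI : I ≠ ⊤)
    {f a : C(X, ℝ)} (hf : f ∈ I) (ha : 0 ≤ a) (hpos : ∀ x, f x = 0 → 0 < a x) : a ∉ I := by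
  intro haI
  have hunit : IsUnit (a + f * f) := by
    refine (isUnit_iff_forall_ne_zero _).mpr fun x => ?_
    have hax : 0 ≤ a x := ha x
    rcases eq_or_ne (f x) 0 with hfx | hfx
    · simp [hfx, (hpos x hfx).ne']
    · have : 0 < f x * f x := mul_self_pos.mpr hfx
      simp only [add_apply, mul_apply]
      positivity
  exact hI (I.eq_top_of_isUnit_mem (I.add_mem haI (I.mul_mem_left f hf)) hunit)

theorem exists_mul_eq_zero_of_ne {M N : MaximalSpectrum C(X, ℝ)} (hMN : M ≠ N) :
    ∃ a b : C(X, ℝ), a ∉ M.asIdeal ∧ b ∉ N.asIdeal ∧ a * b = 0 := by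
  have hcop : IsCoprime M.asIdeal N.asIdeal :=
    Ideal.isCoprime_of_isMaximal fun h => hMN (MaximalSpectrum.ext h)
  obtain ⟨f, hfM, g, hgN, hfg⟩ := Ideal.isCoprime_iff_exists.mp hcop
  have hfg_apply (x : X) : f x + g x = 1 := by simpa using congr($hfg x)
  refine ⟨(f - g)⁻, (f - g)⁺, ?_, ?_, negPart_mul_posPart (f - g)⟩
  · refine notMem_of_nonneg_of_forall_eq_zero_pos M.isMaximal.ne_top hfM
      (negPart_nonneg _) fun x hfx => ?_
    have hgx : g x = 1 := by linarith [hfg_apply x]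
    simp [negPart_def, hfx, hgx]
  · refine notMem_of_nonneg_of_forall_eq_zero_pos N.isMaximal.ne_top hgN
      (posPart_nonneg _) fun x hgx => ?_
    have hfx : f x = 1 := by linarith [hfg_apply x]
    simp [posPart_def, hfx, hgx]

end ContinuousMap

theorem stmt_18_general {X : Type*} [TopologicalSpace X] :
    T2Space (MaximalSpectrum C(X, ℝ)) :=
  MaximalSpectrum.t2Space_of_exists_mul_eq_zero fun _ _ => ContinuousMap.exists_mul_eq_zero_of_ne

theorem stmt_18 {X : Type*} [TopologicalSpace X] [T35Space X] :
    T2Space (MaximalSpectrum C(X, ℝ)) :=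
  stmt_18_general
end
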